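/- arXiv:2304.05456 — 2 statements merged into one kernel-verified Lean document; each statement's English description precedes it below -/
import Mathlib

section
/- For every d-dimensional pseudo-cube G = (V,E) and every nonempty set U of vertices of size s, the edge expansion satisfies φ_G(U) ≥ d − log₂ s. -/
/-!
We model a finite `d`-regular graph with a proper edge `d`-coloring
(each vertex meets exactly one edge of each color) by giving, for every
color `i : Fin d`, a fixed-point-free involution `m i` on the vertices:
the color-`i` edges are the pairs `{v, m i v}`.
-/
structure EdgeColoredGraph (V : Type) (d : ℕ) where
  /-- `m i v` is the other endpoint of the unique color-`i` edge at `v`. -/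
  m : Fin d → V → V
  invol : ∀ i v, m i (m i v) = v
  ne : ∀ i v, m i v ≠ v

namespace EdgeColoredGraph

variable {V : Type} {d : ℕ}

/-- `G.ReachIn S u v` : `v` is reachable from `u` using only edges whose
color lies in `S`. -/
def ReachIn (G : EdgeColoredGraph V d) (S : Set (Fin d)) : V → V → Prop :=
  Relation.ReflTransGen (fun a b => ∃ i ∈ S, G.m i a = b)

/-- Color independence: for every color `i`, contracting all edges of
color `≠ i` produces no self-loop, i.e. no color-`i` edge has its two
endpoints joined by a path avoiding color `i`. -/
def IsPseudoCube (G : EdgeColoredGraph V d) : Prop :=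
  ∀ (i : Fin d) (v : V), ¬ G.ReachIn {j | j ≠ i} v (G.m i v)

/-- `∂(U)`: the number of edges with exactly one endpoint in `U`
(each such edge is counted once, at its endpoint inside `U`). -/
def boundary [Fintype V] [DecidableEq V] (G : EdgeColoredGraph V d) (U : Finset V) : ℕ :=
  ∑ i : Fin d, (U.filter fun v => G.m i v ∉ U).card

end EdgeColoredGraph

/-!
Let `e_T(U)` count the pairs `(v, j)` with `v ∈ U`, `j ∈ T` and `m j v ∈ U`. We show
`e_T(U) ≤ |U| log₂ |U|` by adding one color `i` at a time: split `U` into its components for the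
colors of `T`. Color independence forbids an `i`-edge inside a component `C`, so at most
`min (|C|, |U| - |C|)` vertices of `C` have their `i`-neighbour in `U`, and
`min (c, n - c) + c log₂ c ≤ c log₂ n`; summing over the components gives the bound
for `T ∪ {i}`.
With all `d` colors, `d |U| = ∂(U) + e(U)`.
-/

open Finset

lemma Real.sub_one_le_logb_two {x : ℝ} (h1 : 1 ≤ x) (h2 : x ≤ 2) :
    x - 1 ≤ Real.logb 2 x := by
  rw [Real.le_logb_iff_rpow_le one_lt_two (by linarith)]
  have := rpow_one_add_le_one_add_mul_self (s := 1) (by norm_num) (p := x - 1)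
    (by linarith) (by linarith)
  norm_num at this
  linarith

lemma Real.add_mul_logb_le_mul_logb {a c n : ℝ} (hc : 1 ≤ c) (hcn : c ≤ n) (hac : a ≤ c)
    (han : a ≤ n - c) : a + c * Real.logb 2 c ≤ c * Real.logb 2 n := by
  have hc0 : 0 < c := by linarith
  have hlog : Real.logb 2 n - Real.logb 2 c = Real.logb 2 (n / c) :=
    (Real.logb_div (by linarith) hc0.ne').symm
  suffices a ≤ c * Real.logb 2 (n / c) by rw [← hlog] at this; linarith
  rcases le_total (2 * c) n with h | h
  · have : 1 ≤ Real.logb 2 (n / c) := by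
      rw [Real.le_logb_iff_rpow_le one_lt_two (div_pos (by linarith) hc0), Real.rpow_one,
        le_div_iff₀ hc0]
      linarith
    nlinarith
  · have := Real.sub_one_le_logb_two (x := n / c) ((le_div_iff₀ hc0).2 (by linarith))
      ((div_le_iff₀ hc0).2 (by linarith))
    calc a ≤ c * (n / c - 1) := by rw [mul_sub, mul_div_cancel₀ _ hc0.ne']; linarith
      _ ≤ c * Real.logb 2 (n / c) := by gcongr

namespace EdgeColoredGraph

variable {V : Type} {d : ℕ} (G : EdgeColoredGraph V d)

lemma m_injective (i : Fin d) : Function.Injective (G.m i) :=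
  Function.LeftInverse.injective (G.invol i)

def AdjWithin (T : Finset (Fin d)) (U : Finset V) (a b : V) : Prop :=
  a ∈ U ∧ b ∈ U ∧ ∃ i ∈ T, G.m i a = b

instance (T : Finset (Fin d)) (U : Finset V) : Std.Symm (G.AdjWithin T U) where
  symm _ _ := fun ⟨ha, hb, i, hi, h⟩ => ⟨hb, ha, i, hi, h ▸ G.invol i _⟩

def ReachWithin (T : Finset (Fin d)) (U : Finset V) : V → V → Prop :=
  Relation.ReflTransGen (G.AdjWithin T U)

variable {G} {T : Finset (Fin d)} {U : Finset V} {u v w : V}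

lemma ReachWithin.symm (h : G.ReachWithin T U v w) : G.ReachWithin T U w v :=
  Std.Symm.symm (r := Relation.ReflTransGen (G.AdjWithin T U)) _ _ h

lemma ReachWithin.reachIn_of_notMem {i : Fin d} (hi : i ∉ T) (h : G.ReachWithin T U v w) :
    G.ReachIn {j | j ≠ i} v w :=
  Relation.ReflTransGen.mono
    (fun _ _ ⟨_, _, j, hj, hm⟩ => ⟨j, fun hji => hi (hji ▸ hj), hm⟩) _ _ h

variable (G T U) in
open Classical in
noncomputable def component (u : V) : Finset V :=
  U.filter (G.ReachWithin T U u)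

lemma mem_component : w ∈ G.component T U u ↔ w ∈ U ∧ G.ReachWithin T U u w := by
  classical
  simp [component]

lemma component_subset : G.component T U u ⊆ U :=
  fun _ hw => (mem_component.1 hw).1

lemma self_mem_component (hu : u ∈ U) : u ∈ G.component T U u :=
  mem_component.2 ⟨hu, Relation.ReflTransGen.refl⟩

lemma component_eq_of_mem (hw : w ∈ G.component T U u) :
    G.component T U w = G.component T U u := by
  have hr := (mem_component.1 hw).2
  ext x
  simp only [mem_component]
  exact and_congr_right fun _ => ⟨hr.trans, hr.symm.trans⟩

lemma m_mem_component {j : Fin d} (hj : j ∈ T) (hv : v ∈ G.component T U u)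
    (hm : G.m j v ∈ U) :
    G.m j v ∈ G.component T U u := by
  obtain ⟨hvU, hr⟩ := mem_component.1 hv
  exact mem_component.2 ⟨hm, hr.tail ⟨hvU, hm, j, hj, rfl⟩⟩

lemma m_notMem_component (hG : G.IsPseudoCube) {i : Fin d} (hi : i ∉ T)
    (hv : v ∈ G.component T U u) : G.m i v ∉ G.component T U u := fun hm =>
  hG i v <| ReachWithin.reachIn_of_notMem hi <|
    (mem_component.1 hv).2.symm.trans (mem_component.1 hm).2

lemma filter_component_eq [DecidableEq V] :
    {w ∈ U | G.component T U w = G.component T U u} = G.component T U u := by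
  ext w
  rw [mem_filter]
  exact ⟨fun ⟨hw, hwu⟩ => hwu ▸ self_mem_component hw,
    fun hw => ⟨component_subset hw, component_eq_of_mem hw⟩⟩

lemma sum_sum_component [DecidableEq V] {M : Type*} [AddCommMonoid M] (f : V → M) :
    ∑ C ∈ U.image (G.component T U), ∑ v ∈ C, f v = ∑ v ∈ U, f v := by
  rw [← sum_fiberwise_of_maps_to (fun v hv => mem_image_of_mem (G.component T U) hv) f]
  refine sum_congr rfl fun C hC => ?_
  obtain ⟨u, -, rfl⟩ := mem_image.1 hC
  rw [filter_component_eq]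

variable [DecidableEq V]

variable (G) in
/-- Edges inside `X ∩ Y` are counted from both ends. -/
def edgesBetween (T : Finset (Fin d)) (X Y : Finset V) : ℕ :=
  ∑ j ∈ T, #{v ∈ X | G.m j v ∈ Y}

lemma edgesBetween_insert {i : Fin d} (hi : i ∉ T) (X Y : Finset V) :
    G.edgesBetween (insert i T) X Y = #{v ∈ X | G.m i v ∈ Y} + G.edgesBetween T X Y :=
  sum_insert hi

lemma sum_edgesBetween_component (S : Finset (Fin d)) (Y : Finset V) :
    ∑ C ∈ U.image (G.component T U), G.edgesBetween S C Y = G.edgesBetween S U Y := by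
  simp only [edgesBetween, card_filter]
  rw [sum_comm]
  exact sum_congr rfl fun j _ => sum_sum_component _

lemma edgesBetween_component_self :
    G.edgesBetween T (G.component T U u) U =
      G.edgesBetween T (G.component T U u) (G.component T U u) :=
  sum_congr rfl fun _ hj => congrArg card <| filter_congr fun _ hv =>
    ⟨m_mem_component hj hv, fun hm => component_subset hm⟩

lemma card_filter_m_mem_le_card_sub_card (hG : G.IsPseudoCube) {i : Fin d} (hi : i ∉ T) :
    #{v ∈ G.component T U u | G.m i v ∈ U} ≤ #U - #(G.component T U u) := by
  rw [← card_sdiff_of_subset component_subset]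
  refine card_le_card_of_injOn (G.m i) (fun v hv => ?_) (G.m_injective i).injOn
  obtain ⟨hvC, hvU⟩ := mem_filter.1 hv
  exact mem_sdiff.2 ⟨hvU, m_notMem_component hG hi hvC⟩

lemma edgesBetween_insert_component_le (hG : G.IsPseudoCube) {i : Fin d} (hi : i ∉ T)
    (ih : ∀ W : Finset V, (G.edgesBetween T W W : ℝ) ≤ #W * Real.logb 2 #W) (hu : u ∈ U) :
    (G.edgesBetween (insert i T) (G.component T U u) U : ℝ) ≤
      #(G.component T U u) * Real.logb 2 #U := by
  set C := G.component T U u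
  have hCU : #C ≤ #U := card_le_card component_subset
  have hC : 1 ≤ #C := card_pos.2 ⟨u, self_mem_component hu⟩
  have hcross := card_filter_m_mem_le_card_sub_card (U := U) (u := u) hG hi
  have hcard : #{v ∈ C | G.m i v ∈ U} ≤ #C := card_filter_le _ _
  rw [edgesBetween_insert hi, edgesBetween_component_self]
  push_cast
  have := Real.add_mul_logb_le_mul_logb (a := #{v ∈ C | G.m i v ∈ U}) (c := #C) (n := #U)
    (by exact_mod_cast hC) (by exact_mod_cast hCU) (by exact_mod_cast hcard)
    (by rw [← Nat.cast_sub hCU]; exact_mod_cast hcross)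
  linarith [ih C]

lemma edgesBetween_self_le (hG : G.IsPseudoCube) (T : Finset (Fin d)) (U : Finset V) :
    (G.edgesBetween T U U : ℝ) ≤ #U * Real.logb 2 #U := by
  induction T using Finset.induction_on generalizing U with
  | empty =>
    simp only [edgesBetween, sum_empty, CharP.cast_eq_zero]
    rcases U.eq_empty_or_nonempty with rfl | hU
    · simp
    · exact mul_nonneg (Nat.cast_nonneg _)
        (Real.logb_nonneg one_lt_two (by exact_mod_cast hU.card_pos))
  | @insert i T hi ih =>
    calc (G.edgesBetween (insert i T) U U : ℝ)
        = ∑ C ∈ U.image (G.component T U), (G.edgesBetween (insert i T) C U : ℝ) := by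
          rw [← sum_edgesBetween_component (T := T)]; push_cast; rfl
      _ ≤ ∑ C ∈ U.image (G.component T U), (#C : ℝ) * Real.logb 2 #U := by
          refine sum_le_sum fun C hC => ?_
          obtain ⟨u, hu, rfl⟩ := mem_image.1 hC
          exact edgesBetween_insert_component_le hG hi ih hu
      _ = #U * Real.logb 2 #U := by
          rw [← sum_mul]
          congr
          simpa using sum_sum_component (G := G) (T := T) (U := U) (fun _ => (1 : ℝ))

variable [Fintype V]

lemma boundary_add_edgesBetween_self (U : Finset V) :
    G.boundary U + G.edgesBetween univ U U = d * #U := by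
  rw [boundary, edgesBetween, ← sum_add_distrib]
  simp_rw [add_comm #{v ∈ U | G.m _ v ∉ U}, card_filter_add_card_filter_not]
  simp

end EdgeColoredGraph

open EdgeColoredGraph in
/-- For every `d`-dimensional pseudo-cube `G` and every nonempty vertex set `U`
of size `s`, the edge expansion satisfies `φ_G(U) = ∂(U)/|U| ≥ d - log₂ s`. -/
theorem pseudoCube_isoperimetry {V : Type} [Fintype V] [DecidableEq V] {d : ℕ}
    (G : EdgeColoredGraph V d) (hG : G.IsPseudoCube) (U : Finset V) (hU : U.Nonempty) :
    (G.boundary U : ℝ) / U.card ≥ d - Real.logb 2 U.card := by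
  have hU' : (0 : ℝ) < #U := by exact_mod_cast hU.card_pos
  have hsplit : (G.boundary U : ℝ) + G.edgesBetween univ U U = d * #U := by
    exact_mod_cast G.boundary_add_edgesBetween_self U
  have hinner := G.edgesBetween_self_le hG univ U
  rw [ge_iff_le, le_div_iff₀ hU', sub_mul]
  linarith
end

section
/- The number of vertices of a d-dimensional weakly dual systolic graph is at least n^(d), where n^(1) = 2 and n^(d) = n^(d−1)·(n^(d−1)+1) for d > 1. -/
namespace EdgeColoredGraph

variable {V : Type} {d : ℕ}

/-- The connected component of `v` in the graph obtained from `G` by deleting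
all edges of the top color `d`. -/
def comp (G : EdgeColoredGraph V (d + 1)) (v : V) : Type :=
  {u : V // G.ReachIn {i | i ≠ Fin.last d} v u}

/-- The (d-dimensional, edge `d`-colored) graph induced by `G` on the connected
component of `v` after deleting all edges of the top color. -/
def restrict (G : EdgeColoredGraph V (d + 1)) (v : V) : EdgeColoredGraph (G.comp v) d where
  m i u := ⟨G.m i.castSucc u.1,
    u.2.tail ⟨i.castSucc, (Fin.castSucc_lt_last i).ne, rfl⟩⟩
  invol i u := Subtype.ext (G.invol i.castSucc u.1)
  ne i u h := G.ne i.castSucc u.1 (congrArg Subtype.val h)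

/-- A weak pseudo-cube: `d`-regular, properly edge `d`-colored, contracting
all edges of color `≠ d` gives no self-loop, and every connected component of
the graph with the color-`d` edges deleted is a `(d-1)`-dimensional weak
pseudo-cube.  (For `d = 1` the conditions amount to a perfect matching, which
holds automatically in this encoding.) -/
def IsWeakPseudoCube : ∀ {d : ℕ} {V : Type}, EdgeColoredGraph V d → Prop
  | 0, _, _ => True
  | _ + 1, _, G =>
      (∀ v, ¬ G.ReachIn {i | i ≠ Fin.last _} v (G.m (Fin.last _) v)) ∧
      ∀ v, IsWeakPseudoCube (G.restrict v)

/-- A weakly dual systolic graph: a weak pseudo-cube such that the multigraph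
obtained by contracting all edges of color `≠ d` is simple (between any two
connected components of the color-`d`-deleted graph there is at most one
color-`d` edge), and every connected component of the color-`d`-deleted graph
is weakly dual systolic of dimension `d - 1`. -/
def IsWeaklyDualSystolic : ∀ {d : ℕ} {V : Type}, EdgeColoredGraph V d → Prop
  | 0, _, _ => True
  | _ + 1, _, G =>
      IsWeakPseudoCube G ∧
      (∀ a b, G.ReachIn {i | i ≠ Fin.last _} a b →
        G.ReachIn {i | i ≠ Fin.last _} (G.m (Fin.last _) a) (G.m (Fin.last _) b) → a = b) ∧
      ∀ v, IsWeaklyDualSystolic (G.restrict v)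

end EdgeColoredGraph

/-- The sequence `n⁽¹⁾ = 2`, `n⁽ᵈ⁾ = n⁽ᵈ⁻¹⁾·(n⁽ᵈ⁻¹⁾ + 1)` counting the
vertices of the `d`-dimensional clique product. -/
def nseq : ℕ → ℕ
  | 0 => 1
  | 1 => 2
  | d + 2 => nseq (d + 1) * (nseq (d + 1) + 1)

/-!
Induction on `d`. Deleting the edges of the top color splits `G` into components, each weakly
dual systolic of dimension `d - 1` and hence with at least `n⁽ᵈ⁻¹⁾` vertices. The top-color
edges leaving one component `C` end in `|C|` pairwise distinct other components (no top-color
edge inside a component, at most one between two components), so there are at least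
`n⁽ᵈ⁻¹⁾ + 1` components.
-/

theorem nseq_succ (d : ℕ) : nseq (d + 1) = nseq d * (nseq d + 1) := by
  cases d <;> rfl

theorem Setoid.mul_card_quotient_le_card {α : Type} [Finite α] (s : Setoid α) {n : ℕ}
    (hn : ∀ a, n ≤ Nat.card {b // s a b}) : n * Nat.card (Quotient s) ≤ Nat.card α := by
  classical
  have : Fintype (Quotient s) := Fintype.ofFinite _
  have hfiber : ∀ q : Quotient s, n ≤ Nat.card {a // Quotient.mk s a = q} := by
    rintro ⟨a⟩
    refine (hn a).trans_eq (Nat.card_congr (Equiv.subtypeEquivRight fun b => ?_))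
    exact ⟨fun h => Quotient.sound (s.symm h), fun h => s.symm (Quotient.exact h)⟩
  calc n * Nat.card (Quotient s) = ∑ _q : Quotient s, n := by simp [mul_comm]
    _ ≤ ∑ q : Quotient s, Nat.card {a // Quotient.mk s a = q} :=
      Finset.sum_le_sum fun q _ => hfiber q
    _ = Nat.card α := by
      rw [← Nat.card_sigma, Nat.card_congr (Equiv.sigmaFiberEquiv _)]

namespace EdgeColoredGraph

variable {V : Type} {d : ℕ}

theorem reachIn_symm (G : EdgeColoredGraph V d) {S : Set (Fin d)} {a b : V}
    (h : G.ReachIn S a b) : G.ReachIn S b a :=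
  have : Std.Symm (fun a b => ∃ i ∈ S, G.m i a = b) :=
    ⟨fun a _ ⟨i, hi, h⟩ => ⟨i, hi, by rw [← h, G.invol]⟩⟩
  Relation.ReflTransGen.stdSymm.symm _ _ h

instance [Finite V] (G : EdgeColoredGraph V (d + 1)) (v : V) : Finite (G.comp v) :=
  Subtype.finite

def sameComp (G : EdgeColoredGraph V (d + 1)) : Setoid V where
  r := G.ReachIn {i | i ≠ Fin.last d}
  iseqv := ⟨fun _ => .refl, G.reachIn_symm, .trans⟩

theorem card_comp_lt_card_quotient_sameComp [Finite V] (G : EdgeColoredGraph V (d + 1))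
    (hloop : ∀ v, ¬ G.sameComp v (G.m (Fin.last d) v))
    (hsimple : ∀ a b, G.sameComp a b →
      G.sameComp (G.m (Fin.last d) a) (G.m (Fin.last d) b) → a = b) (v₀ : V) :
    Nat.card (G.comp v₀) < Nat.card (Quotient G.sameComp) := by
  let F : Option (G.comp v₀) → Quotient G.sameComp := fun o =>
    o.elim ⟦v₀⟧ fun u => ⟦G.m (Fin.last d) u.1⟧
  have hF : Function.Injective F := by
    rintro (_ | ⟨u, hu⟩) (_ | ⟨u', hu'⟩) h
    · rfl
    · exact (hloop u' (G.sameComp.trans (G.sameComp.symm hu') (Quotient.exact h))).elim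
    · exact (hloop u (G.sameComp.trans (G.sameComp.symm hu) (Quotient.exact h.symm))).elim
    · exact congrArg some (Subtype.ext
        (hsimple u u' (G.sameComp.trans (G.sameComp.symm hu) hu') (Quotient.exact h)))
  rw [Nat.lt_iff_add_one_le, ← Finite.card_option]
  exact Nat.card_le_card_of_injective F hF

end EdgeColoredGraph

theorem weaklyDualSystolic_size_general {V : Type} [Fintype V] [Nonempty V] {d : ℕ}
    (G : EdgeColoredGraph V d) (hG : G.IsWeaklyDualSystolic) :
    nseq d ≤ Fintype.card V := by
  induction d generalizing V with
  | zero => exact Fintype.card_pos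
  | succ d ih =>
    obtain ⟨⟨hloop, -⟩, hsimple, hcomp⟩ := hG
    have hcard_comp : ∀ v, nseq d ≤ Nat.card (G.comp v) := fun v => by
      have : Fintype (G.comp v) := Fintype.ofFinite _
      have : Nonempty (G.comp v) := ⟨⟨v, .refl⟩⟩
      simpa [Nat.card_eq_fintype_card] using ih (G.restrict v) (hcomp v)
    obtain ⟨v₀⟩ := ‹Nonempty V›
    have hcomponents : nseq d + 1 ≤ Nat.card (Quotient G.sameComp) :=
      (hcard_comp v₀).trans_lt (G.card_comp_lt_card_quotient_sameComp hloop hsimple v₀)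
    calc nseq (d + 1) = nseq d * (nseq d + 1) := nseq_succ d
      _ ≤ nseq d * Nat.card (Quotient G.sameComp) := Nat.mul_le_mul_left _ hcomponents
      _ ≤ Nat.card V := G.sameComp.mul_card_quotient_le_card hcard_comp
      _ = Fintype.card V := Nat.card_eq_fintype_card

/-- The number of vertices of a (nonempty) `d`-dimensional weakly dual
systolic graph is at least `n⁽ᵈ⁾`, where `n⁽¹⁾ = 2` and
`n⁽ᵈ⁾ = n⁽ᵈ⁻¹⁾(n⁽ᵈ⁻¹⁾ + 1)` for `d > 1`. -/
theorem weaklyDualSystolic_size {V : Type} [Fintype V] [Nonempty V] {d : ℕ}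
    (hd : 1 ≤ d) (G : EdgeColoredGraph V d) (hG : G.IsWeaklyDualSystolic) :
    nseq d ≤ Fintype.card V :=
  weaklyDualSystolic_size_general G hG
end
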